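/- Suppose a suboptimal expert e with gap Δ_e > 2K_e/T₀ is pulled at round n only if R̂_e + c_e(n, n_e) ≥ R̂* + c_*(n, n_*), where c(n, m) = √(2·log(n)/m) is its confidence radius (deterministic given counts). If after u pulls of expert e we have 2·√(2·log(n)/u) + 2K_e/T₀ < Δ_e, i.e. u > 32·log(n)/(Δ_e − 2K_e/T₀)², then on the event that all empirical means are within their confidence radii plus bias K_e/T₀ of the true means, expert e is not pulled. Hence on this event n_e(n) ≤ ⌈32·log(n)/(Δ_e − 2K_e/T₀)²⌉. -/
import Mathlib


open Real

/-- Core deterministic step of the UCB analysis: a suboptimal expert `e` with gap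
`Δ = R̄* - R̄_e > 2K/T₀` is pulled at round `n` only if its UCB index
`R̂_e + √(2·log n / u)` is at least the optimal expert's index
`R̂* + √(2·log n / m)`. On the good event where both empirical means are within
their confidence radii plus bias `K/T₀` of the true means, if
`2√(2·log n / u) + 2K/T₀ < Δ`, then expert `e`'s index is strictly below the
optimal one's, hence `e` is not pulled (so `n_e(n) ≤ ⌈32·log n/(Δ - 2K/T₀)²⌉`). -/
theorem ucb_suboptimal_not_pulled
    (n : ℕ) (u m : ℕ) (hu : 0 < u) (hm : 0 < m)
    (Rbar_e Rbar_star Rhat_e Rhat_star Δ K T₀ : ℝ)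
    (hK : 0 ≤ K) (hT₀ : 0 < T₀)
    (hΔ : Δ = Rbar_star - Rbar_e) (hgap : 2 * K / T₀ < Δ)
    -- good event: empirical means within confidence radius plus bias of true means
    (hgood_e : |Rhat_e - Rbar_e| ≤ Real.sqrt (2 * Real.log n / u) + K / T₀)
    (hgood_star : |Rhat_star - Rbar_star| ≤ Real.sqrt (2 * Real.log n / m) + K / T₀)
    -- enough pulls of the suboptimal expert
    (hpulls : 2 * Real.sqrt (2 * Real.log n / u) + 2 * K / T₀ < Δ) :
    Rhat_e + Real.sqrt (2 * Real.log n / u) <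
      Rhat_star + Real.sqrt (2 * Real.log n / m) := by
  have h1 := abs_le.mp hgood_e
  have h2 := abs_le.mp hgood_star
  have hr : 2 * K / T₀ = 2 * (K / T₀) := by ring
  linarith [h1.1, h1.2, h2.1, h2.2]
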